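/- Let F be a field containing an invertible element q that is not a root of unity, let r be a positive integer, and let σ be the F-linear map on F[t,t^{-1}] with σ(t^m) = q^{-2mr} t^{-m}. Suppose a, c ∈ F are such that the element a(q^{-r} t + q^{r} t^{-1}) + c (q − q^{-1})^{-1} (t − t^{-1}) is fixed by σ. Then c = (q − q^{-1})(q^{r} − q^{-r}) a. In particular, if a ≠ 0 then c ≠ 0. -/

import Mathlib

/-!
Writing `s = q^r` and `d = q - q⁻¹`, the element is `α t + β t⁻¹` with `α = a s⁻¹ + c d⁻¹` and
`β = a s - c d⁻¹`, and `σ` sends it to `s² β t + s⁻² α t⁻¹`. Comparing coefficients of `t` gives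
`s² β = α`, i.e. `(s + s⁻¹) c d⁻¹ = (s² - s⁻²) a`. Since `q` is not a root of unity,
`s + s⁻¹`, `s - s⁻¹` and `d` are nonzero, which yields `c = d (s - s⁻¹) a`.
-/

open LaurentPolynomial

section NotRootOfUnity

variable {K : Type*} [DivisionRing K] {q : K}

theorem zpow_sub_zpow_neg_ne_zero (hq : q ≠ 0) (hroot : ∀ m : ℤ, q ^ m = 1 → m = 0) {n : ℤ}
    (hn : n ≠ 0) : q ^ n - q ^ (-n) ≠ 0 := by
  intro h
  have hsq : q ^ (2 * n) = 1 :=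
    calc q ^ (2 * n) = q ^ (-n) * q ^ n := by rw [two_mul, zpow_add₀ hq, ← sub_eq_zero.mp h]
      _ = 1 := by rw [← zpow_add₀ hq, neg_add_cancel, zpow_zero]
  exact hn (by simpa using hroot _ hsq)

theorem zpow_add_zpow_neg_ne_zero (hq : q ≠ 0) (hroot : ∀ m : ℤ, q ^ m = 1 → m = 0) {n : ℤ}
    (hn : n ≠ 0) : q ^ n + q ^ (-n) ≠ 0 := by
  intro h
  have hsq : q ^ (2 * n) = -1 :=
    calc q ^ (2 * n) = -(q ^ (-n) * q ^ n) := by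
          rw [two_mul, zpow_add₀ hq, eq_neg_of_add_eq_zero_right h, neg_mul, neg_neg]
      _ = -1 := by rw [← zpow_add₀ hq, neg_add_cancel, zpow_zero]
  have h4 : q ^ (2 * n * 2) = 1 := by rw [zpow_mul, hsq]; norm_num
  exact hn (by simpa using hroot _ h4)

end NotRootOfUnity

theorem LaurentPolynomial.mul_coeff_eq_of_map_eq_self {R : Type*} [CommSemiring R]
    (σ : R[T;T⁻¹] →ₗ[R] R[T;T⁻¹]) {x y α β : R} (hσ₁ : σ (T 1) = x • T (-1))
    (hσ₂ : σ (T (-1)) = y • T 1) (hfix : σ (α • T 1 + β • T (-1)) = α • T 1 + β • T (-1)) :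
    β * y = α := by
  rw [map_add, map_smul, map_smul, hσ₁, hσ₂] at hfix
  simpa using congrArg (·.coeff 1) hfix

theorem eq_mul_sub_inv_mul_of_mul_sq_eq {K : Type*} [Field K] {s d a c : K} (hd : d ≠ 0)
    (hs : s + s⁻¹ ≠ 0) (h : (a * s - c * d⁻¹) * s ^ 2 = a * s⁻¹ + c * d⁻¹) :
    c = d * (s - s⁻¹) * a := by
  have hs₀ : s ≠ 0 := by rintro rfl; simp at hs
  have key : (s + s⁻¹) * (c - d * (s - s⁻¹) * a) = 0 := by
    field_simp at h ⊢
    linear_combination -h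
  exact sub_eq_zero.mp ((mul_eq_zero.mp key).resolve_left hs)

/-- **Determination of the Casimir coefficient (rank one).**
Let `q` be a nonzero non-root-of-unity element of a field `F`, `r` a positive integer, and
`σ` the `F`-linear map on `F[t,t⁻¹]` with `σ(tᵐ) = q^{-2mr} t^{-m}`.  If
`a(q^{-r} t + q^{r} t⁻¹) + c (q − q⁻¹)⁻¹ (t − t⁻¹)` is fixed by `σ`, then
`c = (q − q⁻¹)(q^r − q^{-r}) a`; in particular `a ≠ 0` implies `c ≠ 0`. -/
theorem casimir_coefficient_rank_one {F : Type*} [Field F]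
    (q : F) (hq : q ≠ 0) (hroot : ∀ m : ℤ, q ^ m = 1 → m = 0)
    (r : ℕ) (hr : 0 < r)
    (σ : LaurentPolynomial F →ₗ[F] LaurentPolynomial F)
    (hσ : ∀ m : ℤ, σ (T m) = q ^ (-2 * m * (r : ℤ)) • (T (-m) : LaurentPolynomial F))
    (a c : F)
    (hfix : σ (a • (q ^ (-(r : ℤ)) • (T 1 : LaurentPolynomial F)
          + q ^ (r : ℤ) • (T (-1) : LaurentPolynomial F))
        + c • ((q - q⁻¹)⁻¹ • ((T 1 : LaurentPolynomial F) - T (-1))))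
      = a • (q ^ (-(r : ℤ)) • (T 1 : LaurentPolynomial F)
          + q ^ (r : ℤ) • (T (-1) : LaurentPolynomial F))
        + c • ((q - q⁻¹)⁻¹ • ((T 1 : LaurentPolynomial F) - T (-1)))) :
    c = (q - q⁻¹) * (q ^ (r : ℤ) - q ^ (-(r : ℤ))) * a ∧ (a ≠ 0 → c ≠ 0) := by
  set s := q ^ (r : ℤ)
  set d := q - q⁻¹
  have hr' : (r : ℤ) ≠ 0 := by exact_mod_cast hr.ne'
  have hd : d ≠ 0 := by simpa using zpow_sub_zpow_neg_ne_zero hq hroot one_ne_zero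
  have hs : s - s⁻¹ ≠ 0 := by simpa [s] using zpow_sub_zpow_neg_ne_zero hq hroot hr'
  have hs' : s + s⁻¹ ≠ 0 := by simpa [s] using zpow_add_zpow_neg_ne_zero hq hroot hr'
  have hv : a • (s⁻¹ • (T 1 : LaurentPolynomial F) + s • T (-1)) + c • (d⁻¹ • (T 1 - T (-1)))
      = (a * s⁻¹ + c * d⁻¹) • T 1 + (a * s - c * d⁻¹) • T (-1) := by module
  have hexp : q ^ (-2 * -1 * (r : ℤ)) = s ^ 2 := by
    rw [← zpow_natCast, ← zpow_mul]; ring_nf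
  rw [zpow_neg, hv] at hfix
  have hcoeff := mul_coeff_eq_of_map_eq_self σ (hσ 1) (hσ (-1)) hfix
  rw [hexp] at hcoeff
  have key := eq_mul_sub_inv_mul_of_mul_sq_eq hd hs' hcoeff
  refine ⟨by rw [zpow_neg, key], fun ha => ?_⟩
  rw [key]
  exact mul_ne_zero (mul_ne_zero hd hs) ha
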